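/- arXiv:2401.12883 — 3 statements merged into one kernel-verified Lean document; each statement's English description precedes it below -/
import Mathlib

section
/- Let n ≥ 3 and let C_n denote the cycle graph on n vertices. Then for every natural number k, twice the number of edges of the k-coloring graph C_k(C_n) equals n·k(k−4)(k−1)^{n−1} + 4n(k−1)^{n−1} + 2(−1)^n n(k−1)(k−2), as integers. -/
open SimpleGraph Finset

/-- A proper coloring of `G` with colors `Fin k` (value `i` represents color `i+1`). -/
def IsProperColoring {V : Type*} (G : SimpleGraph V) {k : ℕ} (c : V → Fin k) : Prop :=
  ∀ ⦃u v : V⦄, G.Adj u v → c u ≠ c v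

/-- The `k`-coloring graph of `G`: vertices are proper `k`-colorings of `G`, two colorings
adjacent iff they differ at exactly one vertex of `G`. -/
def ColGraph {V : Type*} (G : SimpleGraph V) (k : ℕ) :
    SimpleGraph {c : V → Fin k // IsProperColoring G c} where
  Adj c d := ∃! v, c.1 v ≠ d.1 v
  symm := by
    constructor
    rintro c d ⟨v, hv, hu⟩
    exact ⟨v, hv.symm, fun w hw => hu w hw.symm⟩
  loopless := by
    constructor
    rintro c ⟨v, hv, -⟩
    exact hv rfl

/-- The number of edges of the `k`-coloring graph of `G`. -/
noncomputable def numEdges {V : Type*} (G : SimpleGraph V) (k : ℕ) : ℕ :=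
  Nat.card (ColGraph G k).edgeSet

/-- The number of proper `k`-colorings of `G` (the chromatic polynomial evaluated at `k`). -/
noncomputable def numColorings {V : Type*} (G : SimpleGraph V) (k : ℕ) : ℕ :=
  Nat.card {c : V → Fin k // IsProperColoring G c}

/-- `π_G^{(H)}(k)`: the number of vertex subsets of the `k`-coloring graph of `G`
inducing a subgraph isomorphic to `H`. -/
noncomputable def inducedCopies {V W : Type*} (G : SimpleGraph V) (H : SimpleGraph W)
    (k : ℕ) : ℕ :=
  Nat.card {S : Set {c : V → Fin k // IsProperColoring G c} //
    Nonempty ((ColGraph G k).induce S ≃g H)}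

/-- The number of proper `k`-colorings of `G − v` in which every neighbor of `v`
avoids the first `t` colors (colors `1, …, t`, i.e. `Fin k` values `< t`). -/
noncomputable def restrainedCount {V : Type*} (G : SimpleGraph V) (v : V) (t k : ℕ) : ℕ :=
  Nat.card {c : ↥{w : V | w ≠ v} → Fin k //
    IsProperColoring (G.induce {w : V | w ≠ v}) c ∧
    ∀ w : ↥{w : V | w ≠ v}, G.Adj v ↑w → t ≤ (c w).val}

/-- The `s`-dimensional hypercube graph: vertices are functions `Fin s → Bool`,
adjacent iff they differ in exactly one coordinate. -/
def hypercube (s : ℕ) : SimpleGraph (Fin s → Bool) where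
  Adj x y := ∃! i, x i ≠ y i
  symm := by
    constructor
    rintro x y ⟨i, hi, hu⟩
    exact ⟨i, hi.symm, fun j hj => hu j hj.symm⟩
  loopless := by
    constructor
    rintro x ⟨i, hi, -⟩
    exact hi rfl


section Walks

abbrev WalkEnds (k m : ℕ) (a b : Fin k) : Type :=
  {g : Fin (m+1) → Fin k // (∀ i : Fin m, g i.castSucc ≠ g i.succ) ∧ g 0 = a ∧ g (Fin.last m) = b}

noncomputable def pathCount (k m : ℕ) (a b : Fin k) : ℕ := Nat.card (WalkEnds k m a b)

lemma natCard_sigma {ι : Type*} [Fintype ι] (f : ι → Type*) [∀ i, Finite (f i)] :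
    Nat.card (Σ i, f i) = ∑ i, Nat.card (f i) := by
  classical
  have : ∀ i, Fintype (f i) := fun i => Fintype.ofFinite _
  simp [Nat.card_eq_fintype_card, Fintype.card_sigma]

instance (k m : ℕ) (a b : Fin k) : Finite (WalkEnds k m a b) :=
  Subtype.finite

lemma pathCount_zero (k : ℕ) (a b : Fin k) :
    pathCount k 0 a b = if a = b then 1 else 0 := by
  unfold pathCount WalkEnds
  split
  · next h =>
    subst h
    have : Unique {g : Fin 1 → Fin k // (∀ i : Fin 0, g i.castSucc ≠ g i.succ) ∧ g 0 = a ∧ g (Fin.last 0) = a} := by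
      refine ⟨⟨⟨fun _ => a, fun i => i.elim0, rfl, rfl⟩⟩, ?_⟩
      rintro ⟨g, -, h0, -⟩
      apply Subtype.ext
      funext i
      rw [Subsingleton.elim i 0]
      exact h0
    exact Nat.card_unique
  · next h =>
    have : IsEmpty {g : Fin 1 → Fin k // (∀ i : Fin 0, g i.castSucc ≠ g i.succ) ∧ g 0 = a ∧ g (Fin.last 0) = b} := by
      constructor
      rintro ⟨g, -, h0, hl⟩
      exact h (by rw [← h0, ← hl]; exact congrArg g (Subsingleton.elim _ _))
    exact Nat.card_of_isEmpty

lemma fiber_empty (k m : ℕ) (a b : Fin k) :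
    IsEmpty {g : WalkEnds k (m+1) a b // g.1 ((Fin.last m).castSucc) = b} := by
  constructor
  rintro ⟨⟨g, hw, h0, hl⟩, hf⟩
  have hf' : g ((Fin.last m).castSucc) = b := hf
  exact hw (Fin.last m) (by rw [hf', Fin.succ_last, hl])

def fiber_equiv (k m : ℕ) (a b x : Fin k) (hx : x ≠ b) :
    {g : WalkEnds k (m+1) a b // g.1 ((Fin.last m).castSucc) = x} ≃ WalkEnds k m a x where
  toFun g := ⟨g.1.1 ∘ Fin.castSucc, fun i => by
      have := g.1.2.1 i.castSucc
      rwa [Fin.succ_castSucc] at this,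
    by simpa using g.1.2.2.1, g.2⟩
  invFun g := by
    refine ⟨⟨Fin.snoc g.1 b, fun i => ?_, ?_, ?_⟩, ?_⟩
    · induction i using Fin.lastCases with
      | last =>
        rw [Fin.snoc_castSucc, Fin.succ_last, Fin.snoc_last, g.2.2.2]
        exact hx
      | cast j =>
        rw [Fin.snoc_castSucc, Fin.succ_castSucc, Fin.snoc_castSucc]
        exact g.2.1 j
    · rw [show (0 : Fin (m+2)) = Fin.castSucc 0 from rfl, Fin.snoc_castSucc]
      exact g.2.2.1
    · rw [Fin.snoc_last]
    · show (Fin.snoc g.1 b : Fin (m+2) → Fin k) ((Fin.last m).castSucc) = x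
      rw [Fin.snoc_castSucc]
      exact g.2.2.2
  left_inv g := by
    apply Subtype.ext; apply Subtype.ext
    conv_rhs => rw [← Fin.snoc_init_self g.1.1]
    rw [g.1.2.2.2]
    rfl
  right_inv g := by
    apply Subtype.ext
    funext i
    simp [Fin.snoc_castSucc]

lemma pathCount_succ (k m : ℕ) (a b : Fin k) :
    pathCount k (m+1) a b = ∑ x : Fin k, if x = b then 0 else pathCount k m a x := by
  classical
  have h1 : pathCount k (m+1) a b
      = Nat.card (Σ x : Fin k, {g : WalkEnds k (m+1) a b // g.1 ((Fin.last m).castSucc) = x}) :=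
    Nat.card_congr (Equiv.sigmaFiberEquiv _).symm
  rw [h1, natCard_sigma]
  refine Finset.sum_congr rfl fun x _ => ?_
  split
  · next h =>
    subst h
    haveI := fiber_empty k m a x
    exact Nat.card_of_isEmpty
  · next h => exact Nat.card_congr (fiber_equiv k m a b x h)

lemma key_count (k : ℕ) : ∀ (m : ℕ) (a b : Fin k),
    (k : ℤ) * pathCount k m a b
      = ((k:ℤ)-1)^m + (-1)^m * (if a = b then ((k:ℤ)-1) else -1) := by
  intro m
  induction m with
  | zero =>
    intro a b
    rw [pathCount_zero]
    split <;> push_cast <;> ring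
  | succ m ih =>
    intro a b
    rw [pathCount_succ]
    push_cast
    rw [Finset.mul_sum]
    have h2 : ∀ x : Fin k, (k:ℤ) * (if x = b then (0:ℤ) else (pathCount k m a x : ℤ))
        = (((k:ℤ)-1)^m + (-1)^m * (if a = x then ((k:ℤ)-1) else -1))
          - (if x = b then (((k:ℤ)-1)^m + (-1)^m * (if a = x then ((k:ℤ)-1) else -1)) else 0) := by
      intro x
      rw [mul_ite]
      split
      · ring
      · rw [sub_zero]; exact ih a x
    rw [Finset.sum_congr rfl fun x _ => h2 x, Finset.sum_sub_distrib]
    have h3 : ∑ x : Fin k, (if x = b then (((k:ℤ)-1)^m + (-1)^m * (if a = x then ((k:ℤ)-1) else -1)) else 0)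
        = ((k:ℤ)-1)^m + (-1)^m * (if a = b then ((k:ℤ)-1) else -1) := by
      rw [Finset.sum_ite_eq' Finset.univ b]
      simp
    have h4 : ∑ x : Fin k, (((k:ℤ)-1)^m + (-1)^m * (if a = x then ((k:ℤ)-1) else -1))
        = (k:ℤ) * ((k:ℤ)-1)^m := by
      rw [Finset.sum_add_distrib, Finset.sum_const]
      have h5 : ∑ x : Fin k, (-1:ℤ)^m * (if a = x then ((k:ℤ)-1) else -1)
          = (-1:ℤ)^m * ∑ x : Fin k, (if a = x then ((k:ℤ)-1) else -1) := by
        rw [Finset.mul_sum]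
      rw [h5]
      have h6 : ∑ x : Fin k, (if a = x then ((k:ℤ)-1) else -1)
          = ∑ x : Fin k, ((if a = x then ((k:ℤ)) else 0) - 1) := by
        refine Finset.sum_congr rfl fun x _ => ?_
        split <;> ring
      rw [h6, Finset.sum_sub_distrib, Finset.sum_ite_eq Finset.univ a]
      simp
    rw [h3, h4]
    split <;> ring

end Walks

section Cycle

variable {m k : ℕ}

lemma cycle_add_L1 : (0 : Fin (m+3)) + 1 = Fin.succ (0 : Fin (m+2)) := by
  ext
  simp [Fin.val_add, Fin.val_one]

lemma cycle_add_L2 (i : Fin (m+1)) :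
    (i.castSucc.succ : Fin (m+3)) + 1 = i.succ.succ := by
  ext
  have := i.isLt
  simp only [Fin.val_add, Fin.val_one, Fin.val_succ, Fin.coe_castSucc]
  rw [Nat.mod_eq_of_lt (by omega)]

lemma cycle_add_L3 : (Fin.last (m+2) : Fin (m+3)) + 1 = 0 := by
  ext
  simp [Fin.val_add, Fin.val_one]

lemma isProper_cycle_iff (c : Fin (m+3) → Fin k) :
    IsProperColoring (SimpleGraph.cycleGraph (m+3)) c ↔ ∀ u : Fin (m+3), c u ≠ c (u+1) := by
  constructor
  · intro h u
    apply h
    rw [SimpleGraph.cycleGraph_adj]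
    right
    simp
  · intro h u v hadj
    rw [SimpleGraph.cycleGraph_adj] at hadj
    rcases hadj with h1 | h1
    · have : u = v + 1 := by rw [← h1]; abel
      rw [this]
      exact (h v).symm
    · have : v = u + 1 := by rw [← h1]; abel
      rw [this]
      exact h u

lemma isProper_cons (x : Fin k) (g : Fin (m+2) → Fin k) :
    IsProperColoring (SimpleGraph.cycleGraph (m+3)) (Fin.cons x g) ↔
      ((∀ i : Fin (m+1), g i.castSucc ≠ g i.succ) ∧ x ≠ g 0 ∧ g (Fin.last (m+1)) ≠ x) := by
  rw [isProper_cycle_iff]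
  constructor
  · intro h
    refine ⟨fun i => ?_, ?_, ?_⟩
    · have := h i.castSucc.succ
      rwa [cycle_add_L2, Fin.cons_succ, Fin.cons_succ] at this
    · have := h 0
      rwa [cycle_add_L1, Fin.cons_zero, Fin.cons_succ] at this
    · have := h (Fin.last (m+2))
      rwa [cycle_add_L3, ← Fin.succ_last, Fin.cons_succ, Fin.cons_zero] at this
  · rintro ⟨hw, h0, hl⟩ u
    induction u using Fin.cases with
    | zero => rwa [cycle_add_L1, Fin.cons_zero, Fin.cons_succ]
    | succ j =>
      induction j using Fin.lastCases with
      | last =>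
        simp only [Fin.succ_last]
        rw [cycle_add_L3, ← Fin.succ_last, Fin.cons_succ, Fin.cons_zero]
        exact hl
      | cast i => rw [cycle_add_L2, Fin.cons_succ, Fin.cons_succ]; exact hw i

abbrev ColS (n k : ℕ) := {c : Fin n → Fin k // IsProperColoring (SimpleGraph.cycleGraph n) c}

abbrev AdjPairs (n k : ℕ) :=
  {p : ColS n k × ColS n k // (ColGraph (SimpleGraph.cycleGraph n) k).Adj p.1 p.2}

abbrev PairsAt (n k : ℕ) (v : Fin n) :=
  {p : ColS n k × ColS n k // p.1.1 v ≠ p.2.1 v ∧ ∀ w, w ≠ v → p.1.1 w = p.2.1 w}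

lemma two_mul_numEdges (n k : ℕ) :
    2 * numEdges (SimpleGraph.cycleGraph n) k = Nat.card (AdjPairs n k) := by
  classical
  set G := SimpleGraph.cycleGraph n with hG
  letI : Fintype {c : Fin n → Fin k // IsProperColoring G c} := Fintype.ofFinite _
  letI : DecidableRel (ColGraph G k).Adj := fun a b => Classical.dec _
  have h1 : numEdges G k = (ColGraph G k).edgeFinset.card := by
    rw [numEdges, Nat.card_eq_fintype_card, SimpleGraph.edgeFinset_card]
  rw [h1, ← SimpleGraph.dart_card_eq_twice_card_edges, ← Nat.card_eq_fintype_card]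
  exact Nat.card_congr
    ⟨fun d => ⟨d.toProd, d.adj⟩, fun p => ⟨p.1, p.2⟩, fun d => rfl, fun p => rfl⟩

noncomputable def diffVertex {n k : ℕ} (p : AdjPairs n k) : Fin n := p.2.choose

lemma adjPairs_card (n k : ℕ) :
    Nat.card (AdjPairs n k) = ∑ v : Fin n, Nat.card (PairsAt n k v) := by
  classical
  rw [Nat.card_congr (Equiv.sigmaFiberEquiv (diffVertex (n := n) (k := k))).symm, natCard_sigma]
  refine Finset.sum_congr rfl fun v _ => Nat.card_congr ?_
  refine ⟨fun p => ⟨p.1.1, ?_, ?_⟩,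
    fun q => ⟨⟨q.1, v, q.2.1, fun y hy => by_contra fun hne => hy (q.2.2 y hne)⟩, ?_⟩,
    fun p => Subtype.ext (Subtype.ext rfl), fun q => Subtype.ext rfl⟩
  · have h := p.1.2.choose_spec.1
    rwa [show p.1.2.choose = v from p.2] at h
  · intro w hw
    by_contra hne
    exact hw ((p.1.2.choose_spec.2 w hne).trans p.2)
  · show Exists.choose _ = v
    generalize_proofs h1
    by_contra hne
    exact hne (by_contra fun hne2 => h1.choose_spec.1 (q.2.2 _ hne2))

lemma cycle_adj_translate {a b d : Fin (m+3)}
    (h : (SimpleGraph.cycleGraph (m+3)).Adj a b) :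
    (SimpleGraph.cycleGraph (m+3)).Adj (a+d) (b+d) := by
  rw [SimpleGraph.cycleGraph_adj] at h ⊢
  rcases h with h | h
  · left; rw [← h]; abel
  · right; rw [← h]; abel

def shiftEquiv (k : ℕ) (v : Fin (m+3)) : ColS (m+3) k ≃ ColS (m+3) k where
  toFun c := ⟨fun u => c.1 (u + v), fun a b hab => c.2 (cycle_adj_translate hab)⟩
  invFun c := ⟨fun u => c.1 (u - v), fun a b hab => by
    have := c.2 (cycle_adj_translate (d := -v) hab)
    simpa [sub_eq_add_neg] using this⟩
  left_inv c := by
    apply Subtype.ext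
    funext u
    simp
  right_inv c := by
    apply Subtype.ext
    funext u
    simp

lemma pairsAt_card_eq (k : ℕ) (v : Fin (m+3)) :
    Nat.card (PairsAt (m+3) k v) = Nat.card (PairsAt (m+3) k 0) := by
  refine Nat.card_congr ⟨fun p => ⟨(shiftEquiv k v p.1.1, shiftEquiv k v p.1.2), ?_, ?_⟩,
    fun p => ⟨((shiftEquiv k v).symm p.1.1, (shiftEquiv k v).symm p.1.2), ?_, ?_⟩, ?_, ?_⟩
  · show p.1.1.1 (0 + v) ≠ p.1.2.1 (0 + v)
    rw [zero_add]; exact p.2.1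
  · intro w hw
    show p.1.1.1 (w + v) = p.1.2.1 (w + v)
    exact p.2.2 (w + v) (fun hc => hw (by simpa using hc))
  · show p.1.1.1 (v - v) ≠ p.1.2.1 (v - v)
    rw [sub_self]; exact p.2.1
  · intro w hw
    show p.1.1.1 (w - v) = p.1.2.1 (w - v)
    refine p.2.2 (w - v) (fun hc => hw ?_)
    rwa [sub_eq_zero] at hc
  · intro p
    apply Subtype.ext
    apply Prod.ext <;> simp
  · intro p
    apply Subtype.ext
    apply Prod.ext <;> simp

abbrev Qset (m k : ℕ) := {q : (Fin (m+2) → Fin k) × (Fin k × Fin k) //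
  (∀ i : Fin (m+1), q.1 i.castSucc ≠ q.1 i.succ) ∧
  q.2.1 ≠ q.2.2 ∧ q.2.1 ≠ q.1 0 ∧ q.2.1 ≠ q.1 (Fin.last (m+1)) ∧
  q.2.2 ≠ q.1 0 ∧ q.2.2 ≠ q.1 (Fin.last (m+1))}

lemma pairsAt_zero_card (k : ℕ) :
    Nat.card (PairsAt (m+3) k 0) = Nat.card (Qset m k) := by
  refine Nat.card_congr ?_
  refine ⟨fun p => ⟨(Fin.tail p.1.1.1, (p.1.1.1 0, p.1.2.1 0)), ?_⟩,
    fun q => ⟨(⟨Fin.cons q.1.2.1 q.1.1,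
        (isProper_cons _ _).mpr ⟨q.2.1, q.2.2.2.1, Ne.symm q.2.2.2.2.1⟩⟩,
      ⟨Fin.cons q.1.2.2 q.1.1,
        (isProper_cons _ _).mpr ⟨q.2.1, q.2.2.2.2.2.1, Ne.symm q.2.2.2.2.2.2⟩⟩), ?_, ?_⟩,
    ?_, ?_⟩
  · have htail : Fin.tail p.1.2.1 = Fin.tail p.1.1.1 :=
      funext fun i => (p.2.2 i.succ (Fin.succ_ne_zero i)).symm
    have hc := (isProper_cons (p.1.1.1 0) (Fin.tail p.1.1.1)).mp
      (by rw [Fin.cons_self_tail]; exact p.1.1.2)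
    have hd := (isProper_cons (p.1.2.1 0) (Fin.tail p.1.2.1)).mp
      (by rw [Fin.cons_self_tail]; exact p.1.2.2)
    rw [htail] at hd
    exact ⟨hc.1, p.2.1, hc.2.1, Ne.symm hc.2.2, hd.2.1, Ne.symm hd.2.2⟩
  · show (Fin.cons q.1.2.1 q.1.1 : Fin (m+3) → Fin k) 0 ≠ (Fin.cons q.1.2.2 q.1.1 : Fin (m+3) → Fin k) 0
    rw [Fin.cons_zero, Fin.cons_zero]
    exact q.2.2.1
  · intro w hw
    show (Fin.cons q.1.2.1 q.1.1 : Fin (m+3) → Fin k) w = (Fin.cons q.1.2.2 q.1.1 : Fin (m+3) → Fin k) w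
    induction w using Fin.cases with
    | zero => exact absurd rfl hw
    | succ j => rw [Fin.cons_succ, Fin.cons_succ]
  · intro p
    have htail : Fin.tail p.1.2.1 = Fin.tail p.1.1.1 :=
      funext fun i => (p.2.2 i.succ (Fin.succ_ne_zero i)).symm
    apply Subtype.ext
    apply Prod.ext
    · apply Subtype.ext
      exact Fin.cons_self_tail p.1.1.1
    · apply Subtype.ext
      show (Fin.cons (p.1.2.1 0) (Fin.tail p.1.1.1) : Fin (m+3) → Fin k) = p.1.2.1
      rw [← htail]
      exact Fin.cons_self_tail p.1.2.1
  · intro q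
    apply Subtype.ext
    show (Fin.tail (Fin.cons q.1.2.1 q.1.1 : Fin (m+3) → Fin k),
      ((Fin.cons q.1.2.1 q.1.1 : Fin (m+3) → Fin k) 0,
       (Fin.cons q.1.2.2 q.1.1 : Fin (m+3) → Fin k) 0)) = q.1
    rw [Fin.tail_cons, Fin.cons_zero, Fin.cons_zero]

abbrev PairAvoid (k : ℕ) (a b : Fin k) :=
  {p : Fin k × Fin k // p.1 ≠ p.2 ∧ p.1 ≠ a ∧ p.1 ≠ b ∧ p.2 ≠ a ∧ p.2 ≠ b}

def qsetFiberEquiv (m k : ℕ) (ab : Fin k × Fin k) :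
    {q : Qset m k // (q.1.1 0, q.1.1 (Fin.last (m+1))) = ab} ≃
      WalkEnds k (m+1) ab.1 ab.2 × PairAvoid k ab.1 ab.2 where
  toFun q :=
    ⟨⟨q.1.1.1, q.1.2.1, congrArg Prod.fst q.2, congrArg Prod.snd q.2⟩,
     ⟨q.1.1.2, by
        have ha : q.1.1.1 0 = ab.1 := congrArg Prod.fst q.2
        have hb : q.1.1.1 (Fin.last (m+1)) = ab.2 := congrArg Prod.snd q.2
        rw [← ha, ← hb]
        exact q.1.2.2⟩⟩
  invFun w :=
    ⟨⟨(w.1.1, w.2.1), by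
        refine ⟨w.1.2.1, w.2.2.1, ?_, ?_, ?_, ?_⟩ <;>
          show _ ≠ (w.1.1 : Fin (m+2) → Fin k) _
        · rw [show w.1.1 0 = ab.1 from w.1.2.2.1]; exact w.2.2.2.1
        · rw [show w.1.1 (Fin.last (m+1)) = ab.2 from w.1.2.2.2]; exact w.2.2.2.2.1
        · rw [show w.1.1 0 = ab.1 from w.1.2.2.1]; exact w.2.2.2.2.2.1
        · rw [show w.1.1 (Fin.last (m+1)) = ab.2 from w.1.2.2.2]; exact w.2.2.2.2.2.2⟩,
     Prod.ext w.1.2.2.1 w.1.2.2.2⟩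
  left_inv q := by
    apply Subtype.ext
    apply Subtype.ext
    rfl
  right_inv w := by
    apply Prod.ext
    · apply Subtype.ext; rfl
    · apply Subtype.ext; rfl

lemma qset_card (m k : ℕ) :
    Nat.card (Qset m k) =
      ∑ ab : Fin k × Fin k, pathCount k (m+1) ab.1 ab.2 * Nat.card (PairAvoid k ab.1 ab.2) := by
  classical
  rw [Nat.card_congr
    (Equiv.sigmaFiberEquiv (fun q : Qset m k => (q.1.1 0, q.1.1 (Fin.last (m+1))))).symm,
    natCard_sigma]
  refine Finset.sum_congr rfl fun ab _ => ?_
  rw [Nat.card_congr (qsetFiberEquiv m k ab), Nat.card_prod]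
  rfl

lemma pairAvoid_card_int (k : ℕ) (a b : Fin k) :
    (Nat.card (PairAvoid k a b) : ℤ) =
      if a = b then ((k:ℤ)-1) * ((k:ℤ)-2) else ((k:ℤ)-2) * ((k:ℤ)-3) := by
  classical
  have e : PairAvoid k a b ≃ {p : Fin k × Fin k // p ∈ (univ \ {a, b} : Finset (Fin k)).offDiag} :=
    Equiv.subtypeEquivRight (by
      intro p
      simp only [Finset.mem_offDiag, Finset.mem_sdiff, Finset.mem_univ, Finset.mem_insert,
        Finset.mem_singleton, true_and]
      tauto)
  rw [Nat.card_congr e, Nat.card_eq_finsetCard, Finset.offDiag_card]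
  have hcard : (univ \ {a, b} : Finset (Fin k)).card = k - ({a, b} : Finset (Fin k)).card := by
    rw [Finset.card_sdiff_of_subset (Finset.subset_univ _), Finset.card_univ, Fintype.card_fin]
  by_cases hab : a = b
  · subst hab
    have h2 : ({a, a} : Finset (Fin k)).card = 1 := by simp
    have hk : 1 ≤ k := a.pos
    rw [if_pos rfl, hcard, h2]
    have h3 : 1 ≤ k - 1 + 1 := by omega
    push_cast [Nat.cast_sub (by nlinarith : k - 1 ≤ (k-1)*(k-1)), Nat.cast_sub hk]
    ring
  · have h2 : ({a, b} : Finset (Fin k)).card = 2 := by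
      rw [Finset.card_insert_of_notMem (by simpa using hab), Finset.card_singleton]
    have hk : 2 ≤ k := by
      by_contra h
      interval_cases k
      · exact a.elim0
      · exact hab (Subsingleton.elim a b)
    rw [if_neg hab, hcard, h2]
    push_cast [Nat.cast_sub (by nlinarith : k - 2 ≤ (k-2)*(k-2)), Nat.cast_sub hk]
    ring

end Cycle

/-- the chromatic pairs polynomial of the cycle graph `C_n`. -/
theorem numEdges_cycleGraph (n : ℕ) (hn : 3 ≤ n) (k : ℕ) :
    (2 * numEdges (SimpleGraph.cycleGraph n) k : ℤ) =
      (n : ℤ) * (k : ℤ) * ((k : ℤ) - 4) * ((k : ℤ) - 1) ^ (n - 1)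
      + 4 * (n : ℤ) * ((k : ℤ) - 1) ^ (n - 1)
      + 2 * (-1 : ℤ) ^ n * (n : ℤ) * ((k : ℤ) - 1) * ((k : ℤ) - 2) := by
  obtain ⟨m, rfl⟩ : ∃ m, n = m + 3 := ⟨n - 3, by omega⟩
  rw [show m + 3 - 1 = m + 2 from rfl]
  rcases Nat.eq_zero_or_pos k with hk | hk
  · subst hk
    have hiso : IsEmpty (ColS (m+3) 0) := ⟨fun c => (c.1 0).elim0⟩
    have hzero : numEdges (SimpleGraph.cycleGraph (m+3)) 0 = 0 := by
      rw [numEdges]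
      haveI : IsEmpty ((ColGraph (SimpleGraph.cycleGraph (m+3)) 0).edgeSet) := by
        constructor
        rintro ⟨e, he⟩
        induction e using Sym2.ind with
        | _ x y => exact hiso.false x
      exact Nat.card_of_isEmpty
    rw [hzero]
    have h1 : ((-1:ℤ))^(m+3) = (-1:ℤ)^(m+2) * (-1) := pow_succ _ _
    push_cast
    rw [h1]
    ring
  · have hk0 : ((k:ℤ)) ≠ 0 := by positivity
    refine mul_left_cancel₀ hk0 ?_
    -- natural number chain
    have h1 : 2 * numEdges (SimpleGraph.cycleGraph (m+3)) k
        = (m+3) * ∑ ab : Fin k × Fin k,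
            pathCount k (m+1) ab.1 ab.2 * Nat.card (PairAvoid k ab.1 ab.2) := by
      rw [two_mul_numEdges, adjPairs_card]
      rw [Finset.sum_congr rfl (fun v _ => (pairsAt_card_eq k v).trans (pairsAt_zero_card k))]
      rw [Finset.sum_const, Finset.card_univ, Fintype.card_fin, smul_eq_mul, qset_card]
    have h1' : (2:ℤ) * (numEdges (SimpleGraph.cycleGraph (m+3)) k : ℤ)
        = ((m:ℤ)+3) * ∑ ab : Fin k × Fin k,
            (pathCount k (m+1) ab.1 ab.2 : ℤ) * (Nat.card (PairAvoid k ab.1 ab.2) : ℤ) := by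
      exact_mod_cast congrArg (Nat.cast : ℕ → ℤ) h1
    rw [h1']
    rw [show (k:ℤ) * (((m:ℤ)+3) * ∑ ab : Fin k × Fin k,
            (pathCount k (m+1) ab.1 ab.2 : ℤ) * (Nat.card (PairAvoid k ab.1 ab.2) : ℤ))
        = ∑ ab : Fin k × Fin k, (k:ℤ) * ((m:ℤ)+3) *
            ((pathCount k (m+1) ab.1 ab.2 : ℤ) * (Nat.card (PairAvoid k ab.1 ab.2) : ℤ)) from by
      rw [Finset.mul_sum, Finset.mul_sum]
      exact Finset.sum_congr rfl fun ab _ => by ring]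
    set A : ℤ := (((k:ℤ)-1)^(m+1) + (-1:ℤ)^(m+1) * ((k:ℤ)-1)) * (((k:ℤ)-1) * ((k:ℤ)-2)) with hA
    set B : ℤ := (((k:ℤ)-1)^(m+1) + (-1:ℤ)^(m+1) * (-1)) * (((k:ℤ)-2) * ((k:ℤ)-3)) with hB
    have hterm : ∀ ab : Fin k × Fin k,
        (k:ℤ) * ((m:ℤ)+3) * ((pathCount k (m+1) ab.1 ab.2 : ℤ) * (Nat.card (PairAvoid k ab.1 ab.2) : ℤ))
          = ((m:ℤ)+3) * (if ab.1 = ab.2 then A else B) := by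
      intro ab
      have h2 := key_count k (m+1) ab.1 ab.2
      have h3 := pairAvoid_card_int k ab.1 ab.2
      rw [show (k:ℤ) * ((m:ℤ)+3) * ((pathCount k (m+1) ab.1 ab.2 : ℤ) * (Nat.card (PairAvoid k ab.1 ab.2) : ℤ))
          = ((m:ℤ)+3) * (((k:ℤ) * (pathCount k (m+1) ab.1 ab.2 : ℤ)) * (Nat.card (PairAvoid k ab.1 ab.2) : ℤ)) from by ring,
        h2, h3]
      by_cases h : ab.1 = ab.2
      · rw [if_pos h, if_pos h, if_pos h, hA]
      · rw [if_neg h, if_neg h, if_neg h, hB]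
    rw [Finset.sum_congr rfl fun ab _ => hterm ab, ← Finset.mul_sum, Fintype.sum_prod_type]
    have hsum : ∀ a : Fin k, (∑ b : Fin k, if a = b then A else B) = A + ((k:ℤ) - 1) * B := by
      intro a
      have hb : ∀ b : Fin k, (if a = b then A else B) = B + (if a = b then A - B else 0) := by
        intro b; split <;> ring
      rw [Finset.sum_congr rfl fun b _ => hb b, Finset.sum_add_distrib, Finset.sum_const,
        Finset.sum_ite_eq, if_pos (Finset.mem_univ a), Finset.card_univ, Fintype.card_fin]
      ring
    rw [Finset.sum_congr rfl fun a _ => hsum a, Finset.sum_const, Finset.card_univ,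
      Fintype.card_fin, nsmul_eq_mul, hA, hB]
    push_cast
    simp only [pow_succ]
    ring
end

section
/- Let G be a finite simple graph and let t ≥ 2. Then for every natural number k, the number of t-element subsets of vertices of the k-coloring graph C_k(G) that are pairwise adjacent (i.e., the number of t-cliques in C_k(G)) equals C(k,t) · Σ_{v ∈ V(G)} N_v^{(t)}(k), where N_v^{(t)}(k) denotes the number of proper k-colorings c of the induced subgraph G − v such that c(w) ∉ {1,…,t} for every neighbor w of v in G. -/
open SimpleGraph Finset

theorem subtypeCongr_apply_pos {α : Type*} {p q : α → Prop} [DecidablePred p] [DecidablePred q]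
    (e : {x // p x} ≃ {x // q x}) (f : {x // ¬p x} ≃ {x // ¬q x}) {x : α} (hx : p x) :
    Equiv.subtypeCongr e f x = ↑(e ⟨x, hx⟩) := by
  simp [Equiv.subtypeCongr, Equiv.sumCompl_symm_apply_of_pos hx]

theorem subtypeCongr_apply_neg {α : Type*} {p q : α → Prop} [DecidablePred p] [DecidablePred q]
    (e : {x // p x} ≃ {x // q x}) (f : {x // ¬p x} ≃ {x // ¬q x}) {x : α} (hx : ¬ p x) :
    Equiv.subtypeCongr e f x = ↑(f ⟨x, hx⟩) := by
  simp [Equiv.subtypeCongr, Equiv.sumCompl_symm_apply_of_neg hx]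

def lowEquiv {k t : ℕ} (h : t ≤ k) : {x : Fin k // x.val < t} ≃ Fin t where
  toFun x := ⟨x.1.val, x.2⟩
  invFun y := ⟨⟨y.val, lt_of_lt_of_le y.isLt h⟩, y.isLt⟩
  left_inv x := by ext; rfl
  right_inv y := rfl

theorem t_le_k {k t : ℕ} (Tp : {T : Finset (Fin k) // T.card = t}) : t ≤ k := by
  rw [← Tp.2]
  simpa using Finset.card_le_univ Tp.1

noncomputable def colPerm {k t : ℕ} (Tp : {T : Finset (Fin k) // T.card = t}) :
    Equiv.Perm (Fin k) :=
  Equiv.subtypeCongr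
    ((lowEquiv (t_le_k Tp)).trans (Tp.1.equivFinOfCardEq Tp.2).symm)
    (Fintype.equivOfCardEq (by
      rw [Fintype.card_subtype_compl, Fintype.card_subtype_compl]
      congr 1
      rw [Fintype.card_congr (lowEquiv (t_le_k Tp)), Fintype.card_fin]
      rw [Fintype.card_coe, Tp.2]))

theorem colPerm_mem {k t : ℕ} (Tp : {T : Finset (Fin k) // T.card = t}) {x : Fin k}
    (hx : x.val < t) : colPerm Tp x ∈ Tp.1 := by
  rw [colPerm, subtypeCongr_apply_pos (p := fun x : Fin k => x.val < t) (q := (· ∈ Tp.1)) _ _ hx]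
  exact Subtype.prop _

theorem colPerm_not_mem {k t : ℕ} (Tp : {T : Finset (Fin k) // T.card = t}) {x : Fin k}
    (hx : ¬ x.val < t) : colPerm Tp x ∉ Tp.1 := by
  rw [colPerm, subtypeCongr_apply_neg (p := fun x : Fin k => x.val < t) (q := (· ∈ Tp.1)) _ _ hx]
  exact Subtype.prop (p := fun y : Fin k => ¬ y ∈ Tp.1) _

theorem colPerm_symm_le {k t : ℕ} (Tp : {T : Finset (Fin k) // T.card = t}) {y : Fin k}
    (hy : y ∉ Tp.1) : t ≤ ((colPerm Tp).symm y).val := by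
  by_contra h
  push_neg at h
  have := colPerm_mem Tp h
  rw [Equiv.apply_symm_apply] at this
  exact hy this

abbrev RColor {V : Type*} (G : SimpleGraph V) (v : V) (t k : ℕ) : Type _ :=
  {c : ↥{w : V | w ≠ v} → Fin k //
    IsProperColoring (G.induce {w : V | w ≠ v}) c ∧
    ∀ w : ↥{w : V | w ≠ v}, G.Adj v ↑w → t ≤ (c w).val}

open Classical in
noncomputable def extFun {V : Type*} {k : ℕ} (v : V) (c : ↥{w : V | w ≠ v} → Fin k) (b : Fin k) :
    V → Fin k :=
  fun u => if h : u = v then b else c ⟨u, h⟩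

theorem extFun_self {V : Type*} {k : ℕ} {v : V} {c : ↥{w : V | w ≠ v} → Fin k} {b : Fin k} :
    extFun v c b v = b := dif_pos rfl

theorem extFun_eq {V : Type*} {k : ℕ} {v : V} {c : ↥{w : V | w ≠ v} → Fin k} {b : Fin k}
    {u : V} (h : u = v) : extFun v c b u = b := by subst h; exact extFun_self

theorem extFun_ne {V : Type*} {k : ℕ} {v : V} {c : ↥{w : V | w ≠ v} → Fin k} {b : Fin k}
    {u : V} (h : ¬ u = v) : extFun v c b u = c ⟨u, h⟩ := dif_neg h

noncomputable def buildCol {V : Type*} (G : SimpleGraph V) {k t : ℕ} (v : V)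
    (Tp : {T : Finset (Fin k) // T.card = t}) (c : RColor G v t k) (b : ↥Tp.1) :
    {c : V → Fin k // IsProperColoring G c} :=
  ⟨extFun v (fun w => colPerm Tp (c.1 w)) b.1, by
    intro u u' hadj
    by_cases hu : u = v
    · rw [hu] at hadj
      by_cases hu' : u' = v
      · rw [hu'] at hadj; exact absurd hadj (G.loopless.irrefl v)
      · rw [extFun_eq hu, extFun_ne hu']
        intro heq
        have h1 : t ≤ (c.1 ⟨u', hu'⟩).val := c.2.2 ⟨u', hu'⟩ hadj
        exact colPerm_not_mem Tp (by omega) (heq ▸ b.2)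
    · by_cases hu' : u' = v
      · rw [hu'] at hadj
        rw [extFun_ne hu, extFun_eq hu']
        intro heq
        have h1 : t ≤ (c.1 ⟨u, hu⟩).val := c.2.2 ⟨u, hu⟩ hadj.symm
        exact colPerm_not_mem Tp (by omega) (heq.symm ▸ b.2)
      · rw [extFun_ne hu, extFun_ne hu']
        intro heq
        exact c.2.1 (show (G.induce {w : V | w ≠ v}).Adj ⟨u, hu⟩ ⟨u', hu'⟩ from hadj)
          ((colPerm Tp).injective heq)⟩

theorem buildCol_apply_self {V : Type*} (G : SimpleGraph V) {k t : ℕ} (v : V)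
    (Tp : {T : Finset (Fin k) // T.card = t}) (c : RColor G v t k) (b : ↥Tp.1) :
    (buildCol G v Tp c b).1 v = b.1 := by
  have h : (buildCol G v Tp c b).1 = extFun v (fun w => colPerm Tp (c.1 w)) b.1 := rfl
  rw [h]; exact extFun_self

theorem buildCol_apply_ne {V : Type*} (G : SimpleGraph V) {k t : ℕ} (v : V)
    (Tp : {T : Finset (Fin k) // T.card = t}) (c : RColor G v t k) (b : ↥Tp.1)
    {u : V} (h : ¬ u = v) :
    (buildCol G v Tp c b).1 u = colPerm Tp (c.1 ⟨u, h⟩) := by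
  have h2 : (buildCol G v Tp c b).1 = extFun v (fun w => colPerm Tp (c.1 w)) b.1 := rfl
  rw [h2]; exact extFun_ne h

theorem buildCol_injective {V : Type*} (G : SimpleGraph V) {k t : ℕ} (v : V)
    (Tp : {T : Finset (Fin k) // T.card = t}) (c : RColor G v t k) :
    Function.Injective (buildCol G v Tp c) := by
  intro b b' h
  have := buildCol_apply_self G v Tp c b
  rw [h, buildCol_apply_self] at this
  exact Subtype.ext this.symm

noncomputable def clqSet {V : Type*} (G : SimpleGraph V) {k t : ℕ} (v : V)
    (Tp : {T : Finset (Fin k) // T.card = t}) (c : RColor G v t k) :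
    Finset {c : V → Fin k // IsProperColoring G c} :=
  Tp.1.attach.map ⟨buildCol G v Tp c, buildCol_injective G v Tp c⟩

theorem mem_clqSet {V : Type*} (G : SimpleGraph V) {k t : ℕ} (v : V)
    (Tp : {T : Finset (Fin k) // T.card = t}) (c : RColor G v t k)
    {x : {c : V → Fin k // IsProperColoring G c}} :
    x ∈ clqSet G v Tp c ↔ ∃ b : ↥Tp.1, buildCol G v Tp c b = x := by
  constructor
  · intro hx
    rw [clqSet] at hx
    obtain ⟨b, -, h⟩ := Finset.mem_map.mp hx
    exact ⟨b, h⟩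
  · rintro ⟨b, rfl⟩
    rw [clqSet]
    exact Finset.mem_map.mpr ⟨b, Finset.mem_attach _ _, rfl⟩

theorem clqSet_isNClique {V : Type*} (G : SimpleGraph V) {k t : ℕ} (v : V)
    (Tp : {T : Finset (Fin k) // T.card = t}) (c : RColor G v t k) :
    (ColGraph G k).IsNClique t (clqSet G v Tp c) := by
  constructor
  · intro x hx y hy hne
    rw [Finset.mem_coe, mem_clqSet] at hx hy
    obtain ⟨b, rfl⟩ := hx
    obtain ⟨b', rfl⟩ := hy
    have hbb : b.1 ≠ b'.1 := fun h => hne (congrArg _ (Subtype.ext h))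
    refine ⟨v, ?_, ?_⟩
    · show (buildCol G v Tp c b).1 v ≠ (buildCol G v Tp c b').1 v
      rw [buildCol_apply_self, buildCol_apply_self]; exact hbb
    · intro u hu
      by_contra h
      rw [buildCol_apply_ne G v Tp c b h, buildCol_apply_ne G v Tp c b' h] at hu
      exact hu rfl
  · rw [clqSet, Finset.card_map, Finset.card_attach, Tp.2]

theorem clique_vertex {V : Type*} {G : SimpleGraph V} {k t : ℕ} (ht : 2 ≤ t)
    {S : Finset {c : V → Fin k // IsProperColoring G c}}
    (hS : (ColGraph G k).IsNClique t S) :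
    ∃ v : V, ∀ x ∈ S, ∀ y ∈ S, ∀ u : V, x.1 u ≠ y.1 u → u = v := by
  have hcard : 1 < S.card := by rw [hS.2]; omega
  obtain ⟨a, ha, b, hb, hab⟩ := Finset.one_lt_card.mp hcard
  have hadj : ∃! w, a.1 w ≠ b.1 w := hS.1 ha hb hab
  obtain ⟨v, hv, hvu⟩ := hadj
  refine ⟨v, ?_⟩
  have key : ∀ x ∈ S, ∀ u : V, a.1 u ≠ x.1 u → u = v := by
    intro x hx u hu
    rcases eq_or_ne x a with rfl | hxa
    · exact absurd rfl hu
    rcases eq_or_ne x b with rfl | hxb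
    · exact hvu u hu
    have hax : ∃! w, a.1 w ≠ x.1 w := hS.1 ha hx (Ne.symm hxa)
    obtain ⟨w, hw, hwu⟩ := hax
    have huw : u = w := hwu u hu
    rw [huw]
    by_contra hwv
    have hxv : a.1 v = x.1 v := by
      by_contra h
      exact hwv ((hwu v h).symm)
    have h1 : b.1 v ≠ x.1 v := by
      rw [← hxv]
      exact fun h => hv h.symm
    have h2 : b.1 w ≠ x.1 w := by
      have haw : a.1 w = b.1 w := by
        by_contra h
        exact hwv (hvu w h)
      rw [← haw]
      exact hw
    have hbx : b ≠ x := fun h => h1 (by rw [h])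
    obtain ⟨z, hz, hzu⟩ := hS.1 hb hx hbx
    exact hwv ((hzu w h2).trans (hzu v h1).symm)
  intro x hx y hy u hu
  by_cases h : a.1 u = x.1 u
  · exact key y hy u (by rw [h]; exact hu)
  · exact key x hx u h

noncomputable def toClique {V : Type*} (G : SimpleGraph V) {k t : ℕ}
    (x : Σ v : V, {T : Finset (Fin k) // T.card = t} × RColor G v t k) :
    {S : Finset {c : V → Fin k // IsProperColoring G c} // (ColGraph G k).IsNClique t S} :=
  ⟨clqSet G x.1 x.2.1 x.2.2, clqSet_isNClique G x.1 x.2.1 x.2.2⟩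

theorem toClique_injective {V : Type*} (G : SimpleGraph V) {k t : ℕ} (ht : 2 ≤ t) :
    Function.Injective (toClique (G := G) (k := k) (t := t)) := by
  rintro ⟨v, Tp, c⟩ ⟨v', Tp', c'⟩ h
  have h : clqSet G v Tp c = clqSet G v' Tp' c' := congrArg Subtype.val h
  -- v = v'
  have hvv : v = v' := by
    by_contra hne
    have h2 : 1 < Tp.1.card := by rw [Tp.2]; omega
    obtain ⟨b1, hb1, b2, hb2, hb12⟩ := Finset.one_lt_card.mp h2
    have hx : buildCol G v Tp c ⟨b1, hb1⟩ ∈ clqSet G v' Tp' c' := by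
      rw [← h]; exact (mem_clqSet G v Tp c).mpr ⟨_, rfl⟩
    have hy : buildCol G v Tp c ⟨b2, hb2⟩ ∈ clqSet G v' Tp' c' := by
      rw [← h]; exact (mem_clqSet G v Tp c).mpr ⟨_, rfl⟩
    obtain ⟨d1, hd1⟩ := (mem_clqSet G v' Tp' c').mp hx
    obtain ⟨d2, hd2⟩ := (mem_clqSet G v' Tp' c').mp hy
    have e1 : (buildCol G v Tp c ⟨b1, hb1⟩).1 v = b1 := buildCol_apply_self ..
    have e2 : (buildCol G v Tp c ⟨b2, hb2⟩).1 v = b2 := buildCol_apply_self ..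
    rw [← hd1] at e1
    rw [← hd2] at e2
    rw [buildCol_apply_ne G v' Tp' c' d1 hne] at e1
    rw [buildCol_apply_ne G v' Tp' c' d2 hne] at e2
    exact hb12 (e1.symm.trans e2)
  subst hvv
  -- Tp = Tp'
  have hT : Tp = Tp' := by
    apply Subtype.ext
    ext b
    constructor
    · intro hb
      have hx : buildCol G v Tp c ⟨b, hb⟩ ∈ clqSet G v Tp' c' := by
        rw [← h]; exact (mem_clqSet G v Tp c).mpr ⟨_, rfl⟩
      obtain ⟨d, hd⟩ := (mem_clqSet G v Tp' c').mp hx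
      have e1 : (buildCol G v Tp c ⟨b, hb⟩).1 v = b := buildCol_apply_self ..
      rw [← hd, buildCol_apply_self] at e1
      rw [← e1]
      exact d.2
    · intro hb
      have hx : buildCol G v Tp' c' ⟨b, hb⟩ ∈ clqSet G v Tp c := by
        rw [h]; exact (mem_clqSet G v Tp' c').mpr ⟨_, rfl⟩
      obtain ⟨d, hd⟩ := (mem_clqSet G v Tp c).mp hx
      have e1 : (buildCol G v Tp' c' ⟨b, hb⟩).1 v = b := buildCol_apply_self ..
      rw [← hd, buildCol_apply_self] at e1
      rw [← e1]
      exact d.2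
  subst hT
  -- c = c'
  have hc : c = c' := by
    apply Subtype.ext
    funext w
    obtain ⟨b, hb⟩ := Finset.card_pos.mp (show 0 < Tp.1.card by rw [Tp.2]; omega)
    have hx : buildCol G v Tp c ⟨b, hb⟩ ∈ clqSet G v Tp c' := by
      rw [← h]; exact (mem_clqSet G v Tp c).mpr ⟨_, rfl⟩
    obtain ⟨d, hd⟩ := (mem_clqSet G v Tp c').mp hx
    have e1 : (buildCol G v Tp c ⟨b, hb⟩).1 ↑w = colPerm Tp (c.1 ⟨↑w, w.2⟩) :=
      buildCol_apply_ne G v Tp c _ w.2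
    rw [← hd, buildCol_apply_ne G v Tp c' d w.2] at e1
    exact (colPerm Tp).injective e1.symm
  rw [hc]

theorem toClique_surjective {V : Type*} (G : SimpleGraph V) {k t : ℕ} (ht : 2 ≤ t) :
    Function.Surjective (toClique (G := G) (k := k) (t := t)) := by
  classical
  rintro ⟨S, hS⟩
  obtain ⟨v, hkey⟩ := clique_vertex ht hS
  obtain ⟨a, ha⟩ := Finset.card_pos.mp (show 0 < S.card by rw [hS.2]; omega)
  have hinj : ∀ x ∈ S, ∀ y ∈ S, x.1 v = y.1 v → x = y := by
    intro x hx y hy hxy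
    by_contra hne
    obtain ⟨u, hu⟩ := Function.ne_iff.mp (fun hh => hne (Subtype.ext hh))
    rw [hkey x hx y hy u hu] at hu
    exact hu hxy
  have hagree : ∀ x ∈ S, ∀ u : V, ¬ u = v → x.1 u = a.1 u := by
    intro x hx u hu
    by_contra hne
    exact hu (hkey x hx a ha u hne)
  set T : Finset (Fin k) := S.image (fun x => x.1 v) with hTdef
  have hTcard : T.card = t := by
    rw [hTdef, Finset.card_image_of_injOn (fun x hx y hy => hinj x hx y hy), hS.2]
  set Tp : {T : Finset (Fin k) // T.card = t} := ⟨T, hTcard⟩ with hTpdef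
  set c0 : ↥{w : V | w ≠ v} → Fin k := fun w => a.1 ↑w with hc0def
  have hc0proper : IsProperColoring (G.induce {w : V | w ≠ v}) c0 :=
    fun u u' hadj => a.2 hadj
  have hc0avoid : ∀ (w : ↥{w : V | w ≠ v}), G.Adj v ↑w → c0 w ∉ T := by
    intro w hadj hmem
    obtain ⟨x, hx, hxv⟩ := Finset.mem_image.mp hmem
    have h1 : x.1 ↑w = a.1 ↑w := hagree x hx ↑w w.2
    exact x.2 hadj (hxv.trans h1.symm)
  have hcp : IsProperColoring (G.induce {w : V | w ≠ v})
      (fun w => (colPerm Tp).symm (c0 w)) :=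
    fun u u' hadj hh => hc0proper hadj ((colPerm Tp).symm.injective hh)
  have hcr : ∀ (w : ↥{w : V | w ≠ v}), G.Adj v ↑w →
      t ≤ ((colPerm Tp).symm (c0 w)).val :=
    fun w hadj => colPerm_symm_le Tp (hc0avoid w hadj)
  set cR : RColor G v t k := ⟨fun w => (colPerm Tp).symm (c0 w), hcp, hcr⟩ with hcRdef
  refine ⟨⟨v, Tp, cR⟩, ?_⟩
  apply Subtype.ext
  show clqSet G v Tp cR = S
  ext x
  rw [mem_clqSet]
  constructor
  · rintro ⟨b, rfl⟩
    obtain ⟨y, hy, hyv⟩ := Finset.mem_image.mp b.2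
    have heq : buildCol G v Tp cR b = y := by
      apply Subtype.ext
      funext u
      by_cases hu : u = v
      · rw [hu]
        rw [buildCol_apply_self]
        exact hyv.symm
      · rw [buildCol_apply_ne G v Tp cR b hu]
        show colPerm Tp ((colPerm Tp).symm (c0 ⟨u, hu⟩)) = y.1 u
        rw [Equiv.apply_symm_apply]
        exact (hagree y hy u hu).symm
    rw [heq]
    exact hy
  · intro hx
    have hbT : x.1 v ∈ Tp.1 := Finset.mem_image_of_mem _ hx
    refine ⟨⟨x.1 v, hbT⟩, ?_⟩
    apply Subtype.ext
    funext u
    by_cases hu : u = v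
    · rw [hu, buildCol_apply_self]
    · rw [buildCol_apply_ne G v Tp cR _ hu]
      show colPerm Tp ((colPerm Tp).symm (c0 ⟨u, hu⟩)) = x.1 u
      rw [Equiv.apply_symm_apply]
      exact (hagree x hx u hu).symm

theorem natcard_sigma' {ι : Type*} [Fintype ι] (β : ι → Type*) [∀ i, Finite (β i)] :
    Nat.card (Σ i, β i) = ∑ i, Nat.card (β i) := by
  classical
  haveI : ∀ i, Fintype (β i) := fun i => Fintype.ofFinite _
  simp [Nat.card_eq_fintype_card]

/-- formula for the number of `t`-cliques in the `k`-coloring graph. -/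
theorem cliqueCount_eq_choose_mul_sum_restrained {V : Type*} [Fintype V]
    (G : SimpleGraph V) (t : ℕ) (ht : 2 ≤ t) (k : ℕ) :
    Nat.card {S : Finset {c : V → Fin k // IsProperColoring G c} //
        (ColGraph G k).IsNClique t S} =
      Nat.choose k t * ∑ v : V, restrainedCount G v t k := by
  classical
  have hb : Function.Bijective (toClique (G := G) (k := k) (t := t)) :=
    ⟨toClique_injective G ht, toClique_surjective G ht⟩
  have h1 : Nat.card {S : Finset {c : V → Fin k // IsProperColoring G c} //
      (ColGraph G k).IsNClique t S} =
      Nat.card (Σ v : V, {T : Finset (Fin k) // T.card = t} × RColor G v t k) :=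
    (Nat.card_congr (Equiv.ofBijective _ hb)).symm
  rw [h1, natcard_sigma', Finset.mul_sum]
  refine Finset.sum_congr rfl (fun v _ => ?_)
  rw [Nat.card_prod]
  congr 1
  rw [Nat.card_eq_fintype_card, Fintype.card_finset_len, Fintype.card_fin]
end

section
/- Let G be a finite simple graph with n ≥ 1 vertices and t connected components (so 1 ≤ t ≤ n). Then there exist positive rational numbers a_t, a_{t+1}, …, a_{n+1} such that for every natural number k, the number of edges of the k-coloring graph C_k(G) equals Σ_{i=t}^{n+1} (−1)^{n+1−i} a_i k^i; in particular, in the standard form of the chromatic pairs polynomial the coefficients of k^i are nonzero with alternating signs for t ≤ i ≤ n+1 and are zero for i < t. -/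
open SimpleGraph Finset

section Contract
variable {V : Type*}

/-- contraction of the (deleted) edge `uv`: identify `v` into `u`. -/
def contractG (G : SimpleGraph V) (u v : V) : SimpleGraph {w : V // w ≠ v} where
  Adj a b := a ≠ b ∧ (G.Adj a b ∨ (a.1 = u ∧ G.Adj v b) ∨ (b.1 = u ∧ G.Adj v a))
  symm := by
    constructor
    rintro a b ⟨hne, h⟩
    refine ⟨hne.symm, ?_⟩
    rcases h with h | h | h
    · exact Or.inl h.symm
    · exact Or.inr (Or.inr h)
    · exact Or.inr (Or.inl h)
  loopless := by constructor; rintro a ⟨hne, -⟩; exact hne rfl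

lemma card_split {α : Type*} [Finite α] (Q R : α → Prop) :
    Nat.card {x // Q x} = Nat.card {x // Q x ∧ R x} + Nat.card {x // Q x ∧ ¬ R x} := by
  classical
  rw [← Nat.card_sum]
  apply Nat.card_congr
  exact (Equiv.sumCompl (fun x : {x // Q x} => R x.1)).symm.trans
    (Equiv.sumCongr (Equiv.subtypeSubtypeEquivSubtypeInter Q R)
      (Equiv.subtypeSubtypeEquivSubtypeInter Q (fun x => ¬ R x)))

variable (G : SimpleGraph V) {u v : V} (huv : G.Adj u v)

/-- the deletion graph -/
def delG (G : SimpleGraph V) (u v : V) : SimpleGraph V := G.deleteEdges {s(u,v)}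

lemma delG_adj {a b : V} : (delG G u v).Adj a b ↔ G.Adj a b ∧ ¬ s(a,b) = s(u,v) := by
  simp [delG, SimpleGraph.deleteEdges_adj]

include huv in
lemma proper_iff {k : ℕ} (c : V → Fin k) :
    IsProperColoring G c ↔ IsProperColoring (delG G u v) c ∧ c u ≠ c v := by
  constructor
  · intro h
    exact ⟨fun a b hab => h ((delG_adj G).mp hab).1, h huv⟩
  · rintro ⟨h, huvne⟩ a b hab hc
    by_cases he : s(a,b) = s(u,v)
    · rcases Sym2.eq_iff.mp he with ⟨h1, h2⟩ | ⟨h1, h2⟩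
      · exact huvne (h1 ▸ h2 ▸ hc)
      · exact huvne (h1 ▸ h2 ▸ hc.symm)
    · exact h ((delG_adj G).mpr ⟨hab, he⟩) hc

include huv in
/-- colorings of `G − uv` with `c u = c v` biject with colorings of the contraction. -/
noncomputable def contract_equiv (k : ℕ) :
    {c : V → Fin k // IsProperColoring (delG G u v) c ∧ c u = c v} ≃
    {c : {w : V // w ≠ v} → Fin k // IsProperColoring (contractG G u v) c} := by
  classical
  have hvu : u ≠ v := G.ne_of_adj huv
  refine
  { toFun := fun c => ⟨fun w => c.1 w.1, ?_⟩
    invFun := fun c => ⟨fun w => if h : w = v then c.1 ⟨u, hvu⟩ else c.1 ⟨w, h⟩, ?_, ?_⟩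
    left_inv := ?_
    right_inv := ?_ }
  · -- restriction is proper for the contraction
    rintro a b ⟨hne, hab | ⟨hau, hvb⟩ | ⟨hbu, hva⟩⟩ hc
    · have he : ¬ s((a:V), (b:V)) = s(u,v) := by
        intro he
        rcases Sym2.eq_iff.mp he with ⟨h1, h2⟩ | ⟨h1, h2⟩
        · exact b.2 h2
        · exact a.2 h1
      exact c.2.1 ((delG_adj G).mpr ⟨hab, he⟩) hc
    · have hb : (b : V) ≠ u := by
        intro h; exact hne (Subtype.ext (hau.trans h.symm))
      have he : ¬ s((v:V), (b:V)) = s(u,v) := by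
        intro he
        rcases Sym2.eq_iff.mp he with ⟨h1, h2⟩ | ⟨h1, h2⟩
        · exact hvu h1.symm
        · exact hb h2
      have hc' : c.1 v = c.1 b.1 := by rw [← c.2.2]; exact hau ▸ hc
      exact c.2.1 ((delG_adj G).mpr ⟨hvb, he⟩) hc'
    · have ha : (a : V) ≠ u := by
        intro h; exact hne (Subtype.ext (h.trans hbu.symm))
      have he : ¬ s((v:V), (a:V)) = s(u,v) := by
        intro he
        rcases Sym2.eq_iff.mp he with ⟨h1, h2⟩ | ⟨h1, h2⟩
        · exact hvu h1.symm
        · exact ha h2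
      have hc' : c.1 v = c.1 a.1 := by rw [← c.2.2]; exact hbu ▸ hc.symm
      exact c.2.1 ((delG_adj G).mpr ⟨hva, he⟩) hc'
  · -- extension is proper for delG
    intro a b hab hc
    rw [delG_adj] at hab
    obtain ⟨hab, he⟩ := hab
    have hne : a ≠ b := G.ne_of_adj hab
    by_cases hav : a = v <;> by_cases hbv : b = v
    · exact hne (hav.trans hbv.symm)
    · subst hav
      have hbu : b ≠ u := by
        intro h; subst h; exact he (Sym2.eq_swap)
      simp only [dif_pos rfl, dif_neg hbv] at hc
      refine c.2 ⟨?_, Or.inr (Or.inl ⟨rfl, hab⟩)⟩ hc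
      intro h
      exact hbu (congrArg Subtype.val h).symm
    · subst hbv
      have hau : a ≠ u := by
        intro h; subst h; exact he rfl
      simp only [dif_pos rfl, dif_neg hav] at hc
      refine c.2 ⟨?_, Or.inr (Or.inl ⟨rfl, G.adj_symm hab⟩)⟩ hc.symm
      intro h
      exact hau (congrArg Subtype.val h).symm
    · simp only [dif_neg hav, dif_neg hbv] at hc
      refine c.2 ⟨?_, Or.inl hab⟩ hc
      intro h
      exact hne (congrArg Subtype.val h)
  · -- extension satisfies c u = c v
    show (if h : u = v then _ else _) = (if h : v = v then _ else _)
    rw [dif_neg hvu, dif_pos rfl]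
  · -- left inverse
    rintro ⟨c, hc, hcv⟩
    apply Subtype.ext
    funext w
    show (if h : w = v then _ else _) = c w
    by_cases hw : w = v
    · subst hw; rw [dif_pos rfl]; exact hcv
    · rw [dif_neg hw]
  · rintro ⟨c, hc⟩
    apply Subtype.ext
    funext w
    show (if h : (w:V) = v then _ else _) = c w
    rw [dif_neg w.2]

include huv in
lemma numColorings_rec [Finite V] (k : ℕ) :
    numColorings (delG G u v) k = numColorings G k + numColorings (contractG G u v) k := by
  classical
  unfold numColorings
  rw [card_split (IsProperColoring (delG G u v)) (fun c => c u ≠ c v)]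
  congr 1
  · apply Nat.card_congr
    exact (Equiv.subtypeEquivRight fun c => (proper_iff G huv c).symm)
  · apply Nat.card_congr
    exact (Equiv.subtypeEquivRight (fun c => by simp [not_not])).trans (contract_equiv G huv k)


end Contract

section Comp
variable {V : Type*} {G : SimpleGraph V}

/-- lift a function constant on adjacency to connected components -/
def compLift {β : Sort*} (G : SimpleGraph V) (f : V → β)
    (h : ∀ a b, G.Adj a b → f a = f b) : G.ConnectedComponent → β :=
  ConnectedComponent.lift f (fun v w p hp => by
    clear hp
    induction p with
    | nil => rfl
    | cons h' _ ih => exact (h _ _ h').trans ih)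

@[simp] lemma compLift_mk {β : Sort*} (f : V → β) (h) (w : V) :
    compLift G f h (G.connectedComponentMk w) = f w := rfl

lemma card_comp_bot : Nat.card (⊥ : SimpleGraph V).ConnectedComponent = Nat.card V := by
  apply Nat.card_congr
  exact Equiv.symm (Equiv.ofBijective (fun w => (⊥ : SimpleGraph V).connectedComponentMk w)
    ⟨fun a b hab => (reachable_bot).mp (ConnectedComponent.eq.mp hab),
     ConnectedComponent.ind (fun w => ⟨w, rfl⟩)⟩)

lemma card_comp_contract {u v : V} (huv : G.Adj u v) :
    Nat.card (contractG G u v).ConnectedComponent = Nat.card G.ConnectedComponent := by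
  classical
  have hvu : u ≠ v := G.ne_of_adj huv
  have hf : ∀ a b : V, G.Adj a b →
      (contractG G u v).connectedComponentMk (if h : a = v then ⟨u, hvu⟩ else ⟨a, h⟩) =
      (contractG G u v).connectedComponentMk (if h : b = v then ⟨u, hvu⟩ else ⟨b, h⟩) := by
    intro a b hab
    by_cases hav : a = v <;> by_cases hbv : b = v
    · exact absurd (hav.trans hbv.symm) (G.ne_of_adj hab)
    · rw [dif_pos hav, dif_neg hbv]
      subst hav
      by_cases hbu : b = u
      · congr 1; exact Subtype.ext hbu.symm
      · apply ConnectedComponent.eq.mpr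
        apply Adj.reachable
        exact ⟨fun h => hbu (congrArg Subtype.val h).symm, Or.inr (Or.inl ⟨rfl, hab⟩)⟩
    · rw [dif_pos hbv, dif_neg hav]
      subst hbv
      by_cases hau : a = u
      · congr 1; exact Subtype.ext hau
      · apply ConnectedComponent.eq.mpr
        apply Adj.reachable
        exact ⟨fun h => hau (congrArg Subtype.val h), Or.inr (Or.inr ⟨rfl, G.adj_symm hab⟩)⟩
    · rw [dif_neg hav, dif_neg hbv]
      apply ConnectedComponent.eq.mpr
      apply Adj.reachable
      exact ⟨fun h => G.ne_of_adj hab (congrArg Subtype.val h), Or.inl hab⟩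
  have hg : ∀ a b : {w : V // w ≠ v}, (contractG G u v).Adj a b →
      G.connectedComponentMk a.1 = G.connectedComponentMk b.1 := by
    rintro a b ⟨hne, hab | ⟨hau, hvb⟩ | ⟨hbu, hva⟩⟩
    · exact ConnectedComponent.eq.mpr hab.reachable
    · rw [hau]
      exact ConnectedComponent.eq.mpr (huv.reachable.trans hvb.reachable)
    · rw [hbu]
      exact (ConnectedComponent.eq.mpr (huv.reachable.trans hva.reachable)).symm
  apply Nat.card_congr
  refine
    { toFun := compLift _ (fun a => G.connectedComponentMk a.1) hg
      invFun := compLift _ (fun w =>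
        (contractG G u v).connectedComponentMk (if h : w = v then ⟨u, hvu⟩ else ⟨w, h⟩)) hf
      left_inv := ?_
      right_inv := ?_ }
  · refine ConnectedComponent.ind (fun a => ?_)
    simp only [compLift_mk]
    rw [dif_neg a.2]
  · refine ConnectedComponent.ind (fun w => ?_)
    simp only [compLift_mk]
    by_cases hw : w = v
    · rw [dif_pos hw]
      subst hw
      exact ConnectedComponent.eq.mpr huv.reachable
    · rw [dif_neg hw]
end Comp

section Chrom
variable {V : Type*}

lemma comp_surj_mk (G : SimpleGraph V) : Function.Surjective G.connectedComponentMk :=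
  ConnectedComponent.ind (fun w => ⟨w, rfl⟩)

lemma card_comp_le_card [Finite V] (G : SimpleGraph V) :
    Nat.card G.ConnectedComponent ≤ Nat.card V :=
  Nat.card_le_card_of_surjective _ (comp_surj_mk G)

lemma card_comp_le_delG [Finite V] (G : SimpleGraph V) (u v : V) :
    Nat.card G.ConnectedComponent ≤ Nat.card (delG G u v).ConnectedComponent := by
  apply Nat.card_le_card_of_surjective
    (compLift (delG G u v) (fun w => G.connectedComponentMk w)
      (fun a b hab => ConnectedComponent.eq.mpr (((delG_adj G).mp hab).1.reachable)))
  exact ConnectedComponent.ind (fun w => ⟨(delG G u v).connectedComponentMk w, rfl⟩)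

def ChromClaim {V : Type*} [Fintype V] (G : SimpleGraph V) : Prop :=
  ∃ b : ℕ → ℚ, (∀ i, Nat.card G.ConnectedComponent ≤ i → i ≤ Fintype.card V → 0 < b i) ∧
    ∀ k : ℕ, (numColorings G k : ℚ) =
      ∑ i ∈ Finset.Icc (Nat.card G.ConnectedComponent) (Fintype.card V),
        (-1 : ℚ) ^ (Fintype.card V - i) * b i * (k : ℚ) ^ i

lemma chrom_bot [Fintype V] : ChromClaim (⊥ : SimpleGraph V) := by
  refine ⟨fun _ => 1, fun i _ _ => one_pos, fun k => ?_⟩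
  have ht : Nat.card (⊥ : SimpleGraph V).ConnectedComponent = Fintype.card V := by
    rw [card_comp_bot, Nat.card_eq_fintype_card]
  have hc : numColorings (⊥ : SimpleGraph V) k = k ^ Fintype.card V := by
    unfold numColorings
    rw [Nat.card_congr (Equiv.subtypeUnivEquiv (fun c => by
      intro a b h
      simp only [SimpleGraph.bot_adj] at h))]
    rw [Nat.card_fun, Nat.card_eq_fintype_card (α := Fin k), Fintype.card_fin,
      Nat.card_eq_fintype_card]
  rw [ht, hc, Finset.Icc_self, Finset.sum_singleton]
  simp

theorem chrom_all (n : ℕ) : ∀ (m : ℕ) {V : Type*} [Fintype V] (G : SimpleGraph V),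
    Fintype.card V ≤ n → Nat.card G.edgeSet ≤ m → ChromClaim G := by
  induction n with
  | zero =>
    intro m V _ G hV _
    have hbot : G = ⊥ := by
      ext a b
      simp only [SimpleGraph.bot_adj, iff_false]
      intro h
      exact (Fintype.card_eq_zero_iff.mp (Nat.le_zero.mp hV)).elim a
    rw [hbot]; exact chrom_bot
  | succ n ihn =>
    intro m
    induction m with
    | zero =>
      intro V _ G hV hE
      have he : G.edgeSet = ∅ := by
        rcases Nat.card_eq_zero.mp (Nat.le_zero.mp hE) with h | h
        · exact Set.isEmpty_coe_sort.mp h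
        · exact absurd h (not_infinite_iff_finite.mpr (Set.toFinite _))
      rw [edgeSet_eq_empty.mp he]; exact chrom_bot
    | succ m ihm =>
      intro V _ G hV hE
      classical
      by_cases hadj : ∃ u v, G.Adj u v
      case neg =>
        have hbot : G = ⊥ := by
          ext a b
          simp only [SimpleGraph.bot_adj, iff_false]
          exact fun h => hadj ⟨a, b, h⟩
        rw [hbot]; exact chrom_bot
      obtain ⟨u, v, huv⟩ := hadj
      set N := Fintype.card V with hN
      set t := Nat.card G.ConnectedComponent with htdef
      have hN1 : 1 ≤ N := Fintype.card_pos_iff.mpr ⟨u⟩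
      -- deletion is smaller
      have hEdel : Nat.card (delG G u v).edgeSet ≤ m := by
        have h2 : Nat.card (delG G u v).edgeSet < Nat.card G.edgeSet := by
          rw [show (delG G u v).edgeSet = G.edgeSet \ {s(u,v)} from edgeSet_deleteEdges _,
            Nat.card_coe_set_eq, Nat.card_coe_set_eq]
          exact Set.ncard_diff_singleton_lt_of_mem huv (Set.toFinite _)
        omega
      obtain ⟨b1, hb1pos, hb1⟩ := ihm (delG G u v) hV hEdel
      -- contraction has fewer vertices
      have hNsub : Fintype.card {w : V // w ≠ v} = N - 1 := by
        have : Fintype.card {w : V // ¬ w = v} = N - Fintype.card {w : V // w = v} :=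
          Fintype.card_subtype_compl _
        rwa [Fintype.card_subtype_eq] at this
      have hcard' : Fintype.card {w : V // w ≠ v} ≤ n := by omega
      obtain ⟨b2, hb2pos, hb2⟩ :=
        ihn (Nat.card (contractG G u v).edgeSet) (contractG G u v) hcard' le_rfl
      rw [card_comp_contract huv] at hb2pos hb2
      rw [hNsub] at hb2pos hb2
      set t1 := Nat.card (delG G u v).ConnectedComponent with ht1def
      have htt1 : t ≤ t1 := card_comp_le_delG G u v
      have ht1N : t1 ≤ N := by
        have := card_comp_le_card (delG G u v)
        rwa [Nat.card_eq_fintype_card (α := V)] at this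
      refine ⟨fun i => (if t1 ≤ i then b1 i else 0) + (if i ≤ N - 1 then b2 i else 0),
        ?_, ?_⟩
      · intro i hti hiN
        by_cases hi : i ≤ N - 1
        · refine add_pos_of_nonneg_of_pos ?_ ?_
          · by_cases h1 : t1 ≤ i
            · rw [if_pos h1]; exact (hb1pos i h1 hiN).le
            · rw [if_neg h1]
          · rw [if_pos hi]
            exact hb2pos i hti hi
        · have hiN' : i = N := by omega
          refine add_pos_of_pos_of_nonneg ?_ ?_
          · rw [if_pos (by omega)]
            exact hb1pos i (by omega) hiN
          · rw [if_neg hi]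
      · intro k
        have h' : (numColorings G k : ℚ) =
            (numColorings (delG G u v) k : ℚ) - numColorings (contractG G u v) k := by
          have := numColorings_rec G huv k
          have h2 : (numColorings (delG G u v) k : ℚ) =
              (numColorings G k : ℚ) + numColorings (contractG G u v) k := by
            exact_mod_cast congrArg (Nat.cast : ℕ → ℚ) this
          linarith
        rw [h', hb1 k, hb2 k]
        have e1 : ∑ i ∈ Finset.Icc t1 N, (-1 : ℚ) ^ (N - i) * b1 i * (k:ℚ) ^ i
            = ∑ i ∈ Finset.Icc t N,
                (if t1 ≤ i then (-1 : ℚ) ^ (N - i) * b1 i * (k:ℚ) ^ i else 0) := by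
          rw [← Finset.sum_filter]
          congr 1
          ext i
          simp only [Finset.mem_Icc, Finset.mem_filter]
          omega
        have e2 : ∑ i ∈ Finset.Icc t (N-1), (-1 : ℚ) ^ (N - 1 - i) * b2 i * (k:ℚ) ^ i
            = ∑ i ∈ Finset.Icc t N,
                (if i ≤ N - 1 then (-1 : ℚ) ^ (N - 1 - i) * b2 i * (k:ℚ) ^ i else 0) := by
          rw [← Finset.sum_filter]
          congr 1
          ext i
          simp only [Finset.mem_Icc, Finset.mem_filter]
          omega
        rw [e1, e2, ← Finset.sum_sub_distrib]
        apply Finset.sum_congr rfl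
        intro i hi
        rw [Finset.mem_Icc] at hi
        by_cases h1 : t1 ≤ i <;> by_cases h2 : i ≤ N - 1 <;>
          simp only [if_pos, if_neg, h1, h2, if_true, if_false]
        · have hNi : N - i = (N - 1 - i) + 1 := by omega
          rw [hNi, pow_succ]
          ring
        · have hiN' : ¬ i ≤ N - 1 := h2
          ring
        · have hNi : N - i = (N - 1 - i) + 1 := by omega
          rw [hNi, pow_succ]
          ring
        · ring
end Chrom

section Dup
variable {V : Type*}

/-- duplicate the vertex `v`: add a new vertex adjacent to `v` and to all its neighbors. -/
def dupG (G : SimpleGraph V) (v : V) : SimpleGraph (V ⊕ Unit) where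
  Adj x y :=
    match x, y with
    | Sum.inl a, Sum.inl b => G.Adj a b
    | Sum.inl a, Sum.inr _ => G.Adj a v ∨ a = v
    | Sum.inr _, Sum.inl b => G.Adj v b ∨ b = v
    | Sum.inr _, Sum.inr _ => False
  symm := by
    constructor
    rintro (a | a) (b | b) h
    · exact G.adj_symm h
    · rcases h with h | h
      · exact Or.inl (G.adj_symm h)
      · exact Or.inr h
    · rcases h with h | h
      · exact Or.inl (G.adj_symm h)
      · exact Or.inr h
    · exact h.elim
  loopless := by
    constructor
    rintro (a | a) h
    · exact G.irrefl h
    · exact h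

lemma card_comp_dup (G : SimpleGraph V) (v : V) :
    Nat.card (dupG G v).ConnectedComponent = Nat.card G.ConnectedComponent := by
  have hg : ∀ a b : V ⊕ Unit, (dupG G v).Adj a b →
      Sum.elim (fun a => G.connectedComponentMk a) (fun _ => G.connectedComponentMk v) a =
      Sum.elim (fun a => G.connectedComponentMk a) (fun _ => G.connectedComponentMk v) b := by
    rintro (a | a) (b | b) h <;> simp only [Sum.elim_inl, Sum.elim_inr]
    · exact ConnectedComponent.eq.mpr (Adj.reachable (show G.Adj a b from h))
    · rcases (h : G.Adj a v ∨ a = v) with h | h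
      · exact ConnectedComponent.eq.mpr h.reachable
      · rw [h]
    · rcases (h : G.Adj v b ∨ b = v) with h | h
      · exact ConnectedComponent.eq.mpr h.reachable
      · rw [h]
  have hf : ∀ a b : V, G.Adj a b →
      (dupG G v).connectedComponentMk (Sum.inl a) =
      (dupG G v).connectedComponentMk (Sum.inl b) := by
    intro a b h
    exact ConnectedComponent.eq.mpr (Adj.reachable (show (dupG G v).Adj _ _ from h))
  apply Nat.card_congr
  refine
    { toFun := compLift _ _ hg
      invFun := compLift _ (fun a => (dupG G v).connectedComponentMk (Sum.inl a)) hf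
      left_inv := ?_
      right_inv := ?_ }
  · refine ConnectedComponent.ind ?_
    rintro (a | a)
    · rfl
    · simp only [compLift_mk, Sum.elim_inr]
      exact ConnectedComponent.eq.mpr
        (Adj.reachable (show (dupG G v).Adj (Sum.inl v) (Sum.inr a) from Or.inr rfl))
  · exact ConnectedComponent.ind (fun a => rfl)

variable (G : SimpleGraph V) (v : V) (k : ℕ)

/-- pairs of proper colorings of `G` that differ exactly at `v` -/
abbrev DvSet : Type _ :=
  {p : {c : V → Fin k // IsProperColoring G c} × {c : V → Fin k // IsProperColoring G c} //
    (∀ w, w ≠ v → p.1.1 w = p.2.1 w) ∧ p.1.1 v ≠ p.2.1 v}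

open Function in
noncomputable def dupTo
    (e : {c : (V ⊕ Unit) → Fin k // IsProperColoring (dupG G v) c}) : DvSet G v k := by
  classical
  refine ⟨(⟨fun w => e.1 (Sum.inl w), ?_⟩,
      ⟨Function.update (fun w => e.1 (Sum.inl w)) v (e.1 (Sum.inr ())), ?_⟩), ?_, ?_⟩
  · exact fun a b hab => e.2 (show (dupG G v).Adj (Sum.inl a) (Sum.inl b) from hab)
  · intro a b hab
    rw [Function.update_apply, Function.update_apply]
    by_cases ha : a = v <;> by_cases hb : b = v
    · exact absurd (ha.trans hb.symm) (G.ne_of_adj hab)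
    · rw [if_pos ha, if_neg hb]
      exact e.2 (show (dupG G v).Adj (Sum.inr ()) (Sum.inl b) from Or.inl (ha ▸ hab))
    · rw [if_neg ha, if_pos hb]
      exact fun h =>
        e.2 (show (dupG G v).Adj (Sum.inr ()) (Sum.inl a) from Or.inl (G.adj_symm (hb ▸ hab))) h.symm
    · rw [if_neg ha, if_neg hb]
      exact e.2 (show (dupG G v).Adj (Sum.inl a) (Sum.inl b) from hab)
  · intro w hw
    simp only [Function.update_apply, if_neg hw]
  · simp only [Function.update_self]
    exact e.2 (show (dupG G v).Adj (Sum.inl v) (Sum.inr ()) from Or.inr rfl)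

noncomputable def dupFrom (p : DvSet G v k) :
    {c : (V ⊕ Unit) → Fin k // IsProperColoring (dupG G v) c} := by
  refine ⟨Sum.elim p.1.1.1 (fun _ => p.1.2.1 v), ?_⟩
  rintro (a | a) (b | b) hab <;> simp only [Sum.elim_inl, Sum.elim_inr]
  · exact p.1.1.2 hab
  · rcases (hab : G.Adj a v ∨ a = v) with hab | hab
    · rw [p.2.1 a (G.ne_of_adj hab)]
      exact p.1.2.2 hab
    · subst hab
      exact p.2.2
  · rcases (hab : G.Adj v b ∨ b = v) with hab | hab
    · rw [p.2.1 b (G.ne_of_adj (G.adj_symm hab))]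
      exact p.1.2.2 hab
    · subst hab
      exact fun h => p.2.2 h.symm
  · exact (hab : False).elim

noncomputable def dupColorEquiv :
    {c : (V ⊕ Unit) → Fin k // IsProperColoring (dupG G v) c} ≃ DvSet G v k := by
  classical
  refine { toFun := dupTo G v k, invFun := dupFrom G v k, left_inv := ?_, right_inv := ?_ }
  · intro e
    apply Subtype.ext
    funext x
    rcases x with a | a
    · rfl
    · show Function.update (fun w => e.1 (Sum.inl w)) v (e.1 (Sum.inr ())) v = e.1 (Sum.inr a)
      rw [Function.update_self]
  · rintro ⟨⟨c, d⟩, h1, h2⟩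
    apply Subtype.ext
    apply Prod.ext <;> apply Subtype.ext <;> funext w
    · rfl
    · show Function.update (fun w => Sum.elim c.1 (fun _ : Unit => d.1 v) (Sum.inl w)) v
        (Sum.elim c.1 (fun _ : Unit => d.1 v) (Sum.inr ())) w = d.1 w
      rw [Function.update_apply]
      by_cases hw : w = v
      · rw [if_pos hw, hw]
        rfl
      · rw [if_neg hw]
        exact h1 w hw

end Dup


section Count
variable {V : Type*}

noncomputable def dartEquiv (G : SimpleGraph V) (k : ℕ) :
    (Σ v : V, DvSet G v k) ≃ (ColGraph G k).Dart := by
  classical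
  apply Equiv.ofBijective (fun x => (⟨x.2.1, ⟨x.1, x.2.2.2,
    fun w hw => by_contra fun hne => hw (x.2.2.1 w hne)⟩⟩ : (ColGraph G k).Dart))
  constructor
  · rintro ⟨v, q⟩ ⟨v', q'⟩ heq
    have hpair : q.1 = q'.1 := congrArg SimpleGraph.Dart.toProd heq
    have hv : v = v' := by
      by_contra hvv
      exact q.2.2 (hpair ▸ q'.2.1 v hvv :)
    subst hv
    rw [Subtype.ext hpair]
  · rintro ⟨⟨c, d⟩, hadj⟩
    obtain ⟨w, hw, hu⟩ := hadj
    exact ⟨⟨w, ⟨(c, d), fun x hx => by_contra (fun hne => hx (hu x hne)), hw⟩⟩, rfl⟩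

lemma two_mul_numEdges_s14 [Fintype V] (G : SimpleGraph V) (k : ℕ) :
    2 * numEdges G k = ∑ v : V, numColorings (dupG G v) k := by
  classical
  letI : Fintype {c : V → Fin k // IsProperColoring G c} := Fintype.ofFinite _
  letI : DecidableRel (ColGraph G k).Adj := Classical.decRel _
  have h1 : Nat.card (ColGraph G k).Dart = 2 * numEdges G k := by
    rw [Nat.card_eq_fintype_card, SimpleGraph.dart_card_eq_twice_card_edges]
    unfold numEdges
    rw [SimpleGraph.edgeFinset, Set.toFinset_card, Nat.card_eq_fintype_card]
  rw [← h1, ← Nat.card_congr (dartEquiv G k)]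
  letI : ∀ v : V, Fintype (DvSet G v k) := fun v => Fintype.ofFinite _
  rw [Nat.card_eq_fintype_card, Fintype.card_sigma]
  apply Finset.sum_congr rfl
  intro v _
  rw [numColorings, Nat.card_congr (dupColorEquiv G v k), Nat.card_eq_fintype_card]

end Count


/-- the chromatic pairs polynomial of a graph with `t` connected components
has nonzero alternating coefficients exactly in degrees `t` through `n+1`. -/
theorem numEdges_coefficients_alternating {V : Type*} [Fintype V] (G : SimpleGraph V)
    (n t : ℕ) (hn : Fintype.card V = n) (hn1 : 1 ≤ n)
    (ht : Nat.card G.ConnectedComponent = t) :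
    ∃ a : ℕ → ℚ, (∀ i, t ≤ i → i ≤ n + 1 → 0 < a i) ∧
      ∀ k : ℕ, (numEdges G k : ℚ) =
        ∑ i ∈ Finset.Icc t (n + 1), (-1 : ℚ) ^ (n + 1 - i) * a i * (k : ℚ) ^ i := by
  classical
  subst hn
  subst ht
  have hVne : Nonempty V := Fintype.card_pos_iff.mp (by omega)
  have hsum : Fintype.card (V ⊕ Unit) = Fintype.card V + 1 := by simp
  have hchrom : ∀ v : V, ChromClaim (dupG G v) := fun v =>
    chrom_all (Fintype.card (V ⊕ Unit)) (Nat.card (dupG G v).edgeSet) (dupG G v) le_rfl le_rfl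
  choose B hpos heq using hchrom
  simp only [card_comp_dup, hsum] at hpos heq
  set N := Fintype.card V with hN
  set t := Nat.card G.ConnectedComponent with htdef
  refine ⟨fun i => (∑ v : V, B v i) / 2, ?_, ?_⟩
  · intro i hti hiN
    apply div_pos _ two_pos
    exact Finset.sum_pos (fun v _ => hpos v i hti hiN) Finset.univ_nonempty
  · intro k
    have h2 : (2 : ℚ) * numEdges G k = ∑ v : V, (numColorings (dupG G v) k : ℚ) := by
      exact_mod_cast congrArg (Nat.cast : ℕ → ℚ) (two_mul_numEdges_s14 G k)
    have h3 : (numEdges G k : ℚ) = (∑ v : V, (numColorings (dupG G v) k : ℚ)) / 2 := by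
      linarith
    rw [h3]
    have h4 : ∑ v : V, (numColorings (dupG G v) k : ℚ) =
        ∑ i ∈ Finset.Icc t (N + 1), (-1 : ℚ) ^ (N + 1 - i) * (∑ v : V, B v i) * (k : ℚ) ^ i := by
      rw [Finset.sum_congr rfl (fun v _ => heq v k), Finset.sum_comm]
      apply Finset.sum_congr rfl
      intro i _
      rw [Finset.mul_sum, Finset.sum_mul]
    rw [h4, Finset.sum_div]
    apply Finset.sum_congr rfl
    intro i _
    ring
end
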